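/- arXiv:2507.21334 — 2 statements merged into one kernel-verified Lean document; each statement's English description precedes it below -/
import Mathlib

section
/- The SCL choice probability can be written in multinomial-logit form: P_{ni} = exp(Ṽ_{ni}) / Σ_{k∈V} exp(Ṽ_{nk}), where Ṽ_{ni} = log( Σ_{j∈N(i)} exp( V⁰_{ni} + (μ−1)·log(exp(V⁰_{ni}) + exp(V⁰_{nj})) ) ) and V⁰_{ni} = V_{ni}/μ + (1/μ)·log α_{i,ij}, assuming all allocation parameters for a given alternative i are equal across its neighbors, α_{i,ij} = α_i for all j ∈ N(i). -/
/-!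
Write `x k = (α k * exp (V k)) ^ (1 / μ)`. The edge term splits as
`(x k + x l) ^ μ = x k * (x k + x l) ^ (μ - 1) + x l * (x k + x l) ^ (μ - 1)`, and regrouping the
halves by their first endpoint shows that the SCL denominator is the sum of the SCL numerators over
all alternatives. With equal allocation parameters `x k = exp (V0 k)`, so the numerator of `k` is
exactly `exp (W k)`.
-/

open Real Finset

namespace Real

theorem mul_exp_rpow_one_div {a : ℝ} (ha : 0 < a) (v μ : ℝ) :
    (a * exp v) ^ (1 / μ) = exp (v / μ + 1 / μ * log a) := by
  rw [rpow_def_of_pos (by positivity), log_mul ha.ne' (exp_ne_zero v), log_exp]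
  ring_nf

theorem exp_mul_rpow {y : ℝ} (hy : 0 < y) (a c : ℝ) : exp a * y ^ c = exp (a + c * log y) := by
  rw [rpow_def_of_pos hy, ← exp_add, mul_comm (log y)]

theorem add_rpow_eq_mul_add_mul {x y : ℝ} (hxy : x + y ≠ 0) (μ : ℝ) :
    (x + y) ^ μ = x * (x + y) ^ (μ - 1) + y * (x + y) ^ (μ - 1) := by
  rw [← add_mul, mul_comm, ← rpow_add_one hxy, sub_add_cancel]

end Real

namespace SimpleGraph

variable {ι M : Type*} [Fintype ι] [AddCommMonoid M] (G : SimpleGraph ι) [DecidableRel G.Adj]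

theorem sum_sum_neighborFinset_eq_sum_dart (f : ι → ι → M) :
    ∑ k, ∑ j ∈ G.neighborFinset k, f k j = ∑ d : G.Dart, f d.fst d.snd := by
  rw [Finset.sum_sigma']
  refine Finset.sum_bij' (fun x hx => ⟨(x.1, x.2), by simpa using hx⟩) (fun d _ => ⟨d.fst, d.snd⟩)
    ?_ ?_ ?_ ?_ ?_ <;> aesop

theorem sum_edgeFinset_eq_sum_dart [DecidableEq ι] {g : Sym2 ι → M} {f : ι → ι → M}
    (hgf : ∀ k l, G.Adj k l → g s(k, l) = f k l + f l k) :
    ∑ e ∈ G.edgeFinset, g e = ∑ d : G.Dart, f d.fst d.snd := by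
  rw [← Finset.sum_fiberwise_of_maps_to (g := Dart.edge) fun d _ => mem_edgeFinset.2 d.edge_mem]
  refine Finset.sum_congr rfl fun e he => ?_
  induction e with
  | _ k l =>
    have hkl : G.Adj k l := mem_edgeFinset.1 he
    rw [hgf k l hkl, show s(k, l) = (⟨(k, l), hkl⟩ : G.Dart).edge from rfl, Dart.edge_fiber,
      Finset.sum_pair (Dart.symm_ne _).symm]
    rfl

theorem sum_edgeFinset_lift_add_rpow {x : ι → ℝ} (hx : ∀ k, 0 < x k) (μ : ℝ) :
    ∑ e ∈ G.edgeFinset,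
        Sym2.lift ⟨fun k l => (x k + x l) ^ μ, fun k l => by dsimp only; rw [add_comm]⟩ e =
      ∑ k, ∑ j ∈ G.neighborFinset k, x k * (x k + x j) ^ (μ - 1) := by
  classical
  refine (G.sum_edgeFinset_eq_sum_dart fun k l _ => ?_).trans
    (G.sum_sum_neighborFinset_eq_sum_dart _).symm
  show (x k + x l) ^ μ = _
  rw [add_rpow_eq_mul_add_mul (add_pos (hx k) (hx l)).ne', add_comm (x l)]

end SimpleGraph

/-- The SCL choice probability, with equal allocation parameters `α i` across the
neighbors of each alternative `i`, can be written in multinomial-logit (softmax) form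
with transformed utilities `Ṽ`. -/
theorem scl_softmax_form
    {ι : Type*} [Fintype ι] (G : SimpleGraph ι) [DecidableRel G.Adj]
    (hG : ∀ i : ι, (G.neighborFinset i).Nonempty)
    (μ : ℝ)
    (α : ι → ℝ) (hα : ∀ i, α i ∈ Set.Ioo (0 : ℝ) 1)
    (V : ι → ℝ) (i : ι)
    (V0 : ι → ℝ) (hV0 : ∀ i, V0 i = V i / μ + (1 / μ) * Real.log (α i))
    (W : ι → ℝ)
    (hW : ∀ i, W i = Real.log (∑ j ∈ G.neighborFinset i,
        Real.exp (V0 i + (μ - 1) * Real.log (Real.exp (V0 i) + Real.exp (V0 j))))) :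
    (∑ j ∈ G.neighborFinset i,
        (α i * Real.exp (V i)) ^ (1 / μ) *
          ((α i * Real.exp (V i)) ^ (1 / μ) + (α j * Real.exp (V j)) ^ (1 / μ)) ^ (μ - 1)) /
      (∑ e ∈ G.edgeFinset, Sym2.lift
        ⟨fun k l => ((α k * Real.exp (V k)) ^ (1 / μ) + (α l * Real.exp (V l)) ^ (1 / μ)) ^ μ,
         fun k l => by dsimp only; rw [add_comm]⟩ e) =
    Real.exp (W i) / ∑ k : ι, Real.exp (W k) := by
  have hx : ∀ k, (α k * exp (V k)) ^ (1 / μ) = exp (V0 k) := fun k => by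
    rw [mul_exp_rpow_one_div (hα k).1, hV0]
  have hnum : ∀ k, ∑ j ∈ G.neighborFinset k, (α k * exp (V k)) ^ (1 / μ) *
      ((α k * exp (V k)) ^ (1 / μ) + (α j * exp (V j)) ^ (1 / μ)) ^ (μ - 1) = exp (W k) :=
    fun k => by
      rw [hW k, exp_log (sum_pos (fun j _ => exp_pos _) (hG k))]
      refine sum_congr rfl fun j _ => ?_
      rw [hx, hx, exp_mul_rpow (by positivity)]
  rw [G.sum_edgeFinset_lift_add_rpow (fun k => hx k ▸ exp_pos (V0 k)) μ]
  simp only [hnum]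
end

section
/- When μ = 1 and the allocation parameters of each alternative sum to one over its neighbors (Σ_{j∈N(i)} α_{i,ij} = 1), the SCL choice probability reduces to the multinomial logit probability P_{ni} = exp(V_{ni}) / Σ_k exp(V_{nk}). -/
open Real Finset

/-! With `μ = 1` every exponent `1 / μ` becomes `1` and every `μ - 1` becomes `0`, so the
numerator is `Σ_{j ∈ N(i)} α_{i,ij} e^{V_i} = e^{V_i}`. The denominator splits each edge
`{k, l}` into its two darts `(k, l)` and `(l, k)`; regrouping the darts by their tail turns it
into `Σ_k Σ_{l ∈ N(k)} α_{k,kl} e^{V_k} = Σ_k e^{V_k}`. -/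

namespace SimpleGraph

variable {ι M : Type*} [Fintype ι] [AddCommMonoid M] (G : SimpleGraph ι) [DecidableRel G.Adj]

theorem sum_darts_eq_sum_sum_neighborFinset (f : ι → ι → M) :
    ∑ d : G.Dart, f d.fst d.snd = ∑ v, ∑ w ∈ G.neighborFinset v, f v w := by
  let darts : (Σ v, G.neighborSet v) ≃ G.Dart :=
    { toFun := fun s => ⟨(s.1, s.2), s.2.2⟩, invFun := fun d => ⟨d.fst, d.snd, d.adj⟩ }
  rw [← darts.sum_comp, Fintype.sum_sigma]
  exact sum_congr rfl fun v _ => (sum_subtype _ (fun w => G.mem_neighborFinset v w) (f v)).symm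

theorem sum_edgeFinset_lift_eq_sum_darts (f : ι → ι → M)
    (g : {g : ι → ι → M // ∀ a b, g a b = g b a}) (hg : ∀ k l, g.1 k l = f k l + f l k) :
    ∑ e ∈ G.edgeFinset, Sym2.lift g e = ∑ d : G.Dart, f d.fst d.snd := by
  classical
  rw [← sum_fiberwise_of_maps_to (t := G.edgeFinset) (g := Dart.edge)
    fun d _ => mem_edgeFinset.2 d.edge_mem]
  refine sum_congr rfl fun e he => ?_
  induction e using Sym2.ind with | h v w => ?_
  let d : G.Dart := ⟨(v, w), mem_edgeFinset.1 he⟩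
  rw [show s(v, w) = d.edge from rfl, Dart.edge_fiber, sum_pair d.symm_ne.symm]
  simp [d, Dart.edge, Dart.symm, hg]

end SimpleGraph

/-- When `μ = 1` and each alternative's allocation parameters sum to one over its
neighbors, the SCL choice probability reduces to the multinomial logit probability. -/
theorem scl_reduces_to_mnl
    {ι : Type*} [Fintype ι] (G : SimpleGraph ι) [DecidableRel G.Adj]
    (μ : ℝ) (hμ : μ = 1)
    (α : ι → ι → ℝ)
    (hsum : ∀ i : ι, ∑ j ∈ G.neighborFinset i, α i j = 1)
    (V : ι → ℝ) (i : ι) :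
    (∑ j ∈ G.neighborFinset i,
        (α i j * Real.exp (V i)) ^ (1 / μ) *
          ((α i j * Real.exp (V i)) ^ (1 / μ) + (α j i * Real.exp (V j)) ^ (1 / μ)) ^ (μ - 1)) /
      (∑ e ∈ G.edgeFinset, Sym2.lift
        ⟨fun k l => ((α k l * Real.exp (V k)) ^ (1 / μ) + (α l k * Real.exp (V l)) ^ (1 / μ)) ^ μ,
         fun k l => by dsimp only; rw [add_comm]⟩ e) =
    Real.exp (V i) / ∑ k : ι, Real.exp (V k) := by
  subst hμ
  have weighted_sum (k : ι) : ∑ l ∈ G.neighborFinset k, α k l * exp (V k) = exp (V k) := by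
    rw [← sum_mul, hsum, one_mul]
  rw [G.sum_edgeFinset_lift_eq_sum_darts (fun k l => α k l * exp (V k)) _ (by simp),
    G.sum_darts_eq_sum_sum_neighborFinset fun k l => α k l * exp (V k)]
  simp only [div_one, rpow_one, sub_self, rpow_zero, mul_one, weighted_sum]
end
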